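/- Let D ≥ 1 and N ≥ 3 be integers and define Fish[D,N,x] = E[(F_{D,N} - x)₊]/E[F_{D,N}] for x ≥ 0, where F_{D,N} is a Fisher random variable with D and N degrees of freedom. Then for all x ≥ 0, Fish(D,N,x) = P(F_{D+2,N-2} ≥ ((N-2)D x)/((D+2)N)) - x·((N-2)/N)·P(F_{D,N} ≥ x). -/

import Mathlib

open MeasureTheory ProbabilityTheory Real

/-!
Size-biasing a `Gamma(a, r)` law by `x ↦ x` gives `(a / r) • Gamma(a + 1, r)`, and weighting a
`Gamma(b + 1, r)` law by `y ↦ y⁻¹` gives `(r / b) • Gamma(b, r)`. For independent chi-squares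
this shows that the law `ν` of `F_{D,N}`, size-biased by its value, is `N / (N - 2)` times the
law `ν'` of `(N / D) · A / B`, a rescaled `F_{D+2,N-2}`. Since `(F - x)₊ = (F - x) 1{F ≥ x}`,
this gives `E[(F - x)₊] = N / (N - 2) · ν'[x, ∞) - x · P(F ≥ x)` and `E[F] = N / (N - 2)`.
-/

namespace MeasureTheory

lemma withDensity_map {α β : Type*} [MeasurableSpace α] [MeasurableSpace β] {μ : Measure α}
    {f : α → β} (hf : Measurable f) {g : β → ENNReal} (hg : Measurable g) :
    (μ.map f).withDensity g = (μ.withDensity (g ∘ f)).map f := by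
  ext s hs
  rw [withDensity_apply _ hs, setLIntegral_map hs hg hf, Measure.map_apply hf hs,
    withDensity_apply _ (hf hs), Function.comp_def]

section SizeBiased

variable {ν ν' : Measure ℝ} {m : ℝ}

lemma withDensity_ofReal_map_const_mul {c : ℝ} (hc : 0 ≤ c)
    (h : ν.withDensity ENNReal.ofReal = ENNReal.ofReal m • ν') :
    (ν.map (c * ·)).withDensity ENNReal.ofReal = ENNReal.ofReal (c * m) • ν'.map (c * ·) := by
  have hscale : ENNReal.ofReal ∘ (c * ·) = ENNReal.ofReal c • ENNReal.ofReal := by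
    ext s
    simp [ENNReal.ofReal_mul hc]
  rw [withDensity_map (by fun_prop) ENNReal.measurable_ofReal, hscale,
    withDensity_smul _ ENNReal.measurable_ofReal, h, smul_smul, Measure.map_smul,
    ENNReal.ofReal_mul hc]

lemma setIntegral_id_of_withDensity_ofReal_eq (hν : ∀ᵐ s ∂ν, 0 ≤ s) (hm : 0 ≤ m)
    (h : ν.withDensity ENNReal.ofReal = ENNReal.ofReal m • ν') {S : Set ℝ}
    (hS : MeasurableSet S) :
    ∫ s in S, s ∂ν = m * ν'.real S := by
  rw [integral_eq_lintegral_of_nonneg_ae (ae_restrict_of_ae hν) aestronglyMeasurable_id,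
    ← withDensity_apply _ hS, h, Measure.smul_apply, smul_eq_mul, ENNReal.toReal_mul,
    ENNReal.toReal_ofReal hm, measureReal_def]

lemma integrable_id_of_withDensity_ofReal_eq [IsFiniteMeasure ν'] (hν : ∀ᵐ s ∂ν, 0 ≤ s)
    (h : ν.withDensity ENNReal.ofReal = ENNReal.ofReal m • ν') :
    Integrable (fun s ↦ s) ν := by
  refine ⟨aestronglyMeasurable_id, (hasFiniteIntegral_iff_ofReal hν).2 ?_⟩
  rw [← setLIntegral_univ, ← withDensity_apply _ MeasurableSet.univ, h]
  exact ENNReal.mul_lt_top ENNReal.ofReal_lt_top (measure_lt_top _ _)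

lemma integral_max_sub_zero_of_withDensity_ofReal_eq [IsFiniteMeasure ν] [IsFiniteMeasure ν']
    (hν : ∀ᵐ s ∂ν, 0 ≤ s) (hm : 0 ≤ m)
    (h : ν.withDensity ENNReal.ofReal = ENNReal.ofReal m • ν') (x : ℝ) :
    ∫ s, max (s - x) 0 ∂ν = m * ν'.real (Set.Ici x) - x * ν.real (Set.Ici x) := by
  have hind : (fun s ↦ max (s - x) 0) = (Set.Ici x).indicator (fun s ↦ s - x) := by
    ext s
    rcases le_or_gt x s with hs | hs
    · simp [hs]
    · simp [hs.not_ge, hs.le]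
  rw [hind, integral_indicator measurableSet_Ici,
    integral_sub (integrable_id_of_withDensity_ofReal_eq hν h).integrableOn (integrable_const x),
    setIntegral_id_of_withDensity_ofReal_eq hν hm h measurableSet_Ici, setIntegral_const,
    smul_eq_mul, mul_comm _ x]

lemma integral_max_sub_zero_div_integral_of_withDensity_ofReal_eq [IsFiniteMeasure ν]
    [IsProbabilityMeasure ν'] (hν : ∀ᵐ s ∂ν, 0 ≤ s) (hm : 0 < m)
    (h : ν.withDensity ENNReal.ofReal = ENNReal.ofReal m • ν') (x : ℝ) :
    (∫ s, max (s - x) 0 ∂ν) / ∫ s, s ∂ν = ν'.real (Set.Ici x) - x / m * ν.real (Set.Ici x) := by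
  rw [integral_max_sub_zero_of_withDensity_ofReal_eq hν hm.le h, ← setIntegral_univ,
    setIntegral_id_of_withDensity_ofReal_eq hν hm.le h MeasurableSet.univ, probReal_univ]
  field_simp

end SizeBiased

end MeasureTheory

namespace ProbabilityTheory

instance instSFiniteGammaMeasure (a r : ℝ) : SFinite (gammaMeasure a r) := by
  rw [gammaMeasure]
  infer_instance

lemma measurable_gammaPDF (a r : ℝ) : Measurable (gammaPDF a r) :=
  (measurable_gammaPDFReal a r).ennreal_ofReal

lemma ae_nonneg_gammaMeasure (a r : ℝ) : ∀ᵐ x ∂gammaMeasure a r, 0 ≤ x := by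
  simp only [ae_iff, not_le, gammaMeasure]
  exact (withDensity_apply _ measurableSet_Iio).trans (lintegral_gammaPDF_of_nonpos le_rfl)

lemma mul_gammaPDFReal {a r : ℝ} (ha : 0 < a) (hr : 0 < r) (x : ℝ) :
    x * gammaPDFReal a r x = a / r * gammaPDFReal (a + 1) r x := by
  rcases lt_or_ge x 0 with hx | hx
  · simp [gammaPDFReal, hx.not_ge]
  have hpow : x ^ a = x ^ (a - 1) * x := by
    rw [← rpow_add_one' hx (by simpa using ha.ne'), sub_add_cancel]
  have hΓ : Gamma a ≠ 0 := (Gamma_pos_of_pos ha).ne'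
  simp only [gammaPDFReal, if_pos hx, Gamma_add_one ha.ne', add_sub_cancel_right,
    rpow_add hr, rpow_one, hpow]
  field_simp

lemma withDensity_ofReal_gammaMeasure {a r : ℝ} (ha : 0 < a) (hr : 0 < r) :
    (gammaMeasure a r).withDensity ENNReal.ofReal =
      ENNReal.ofReal (a / r) • gammaMeasure (a + 1) r := by
  rw [gammaMeasure, gammaMeasure, ← withDensity_mul _ (measurable_gammaPDF _ _) (by fun_prop),
    ← withDensity_smul _ (measurable_gammaPDF _ _)]
  congr 1
  ext x
  rw [Pi.mul_apply, Pi.smul_apply, smul_eq_mul, gammaPDF, gammaPDF,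
    ← ENNReal.ofReal_mul (gammaPDFReal_nonneg ha hr x),
    ← ENNReal.ofReal_mul (by positivity), mul_comm, mul_gammaPDFReal ha hr]

lemma withDensity_ofReal_inv_gammaMeasure {b r : ℝ} (hb : 0 < b) (hr : 0 < r) :
    (gammaMeasure (b + 1) r).withDensity (fun x ↦ ENNReal.ofReal x⁻¹) =
      ENNReal.ofReal (r / b) • gammaMeasure b r := by
  rw [gammaMeasure, gammaMeasure, ← withDensity_mul _ (measurable_gammaPDF _ _) (by fun_prop),
    ← withDensity_smul _ (measurable_gammaPDF _ _)]
  refine withDensity_congr_ae ?_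
  filter_upwards [Measure.ae_ne volume (0 : ℝ)] with x hx
  rw [Pi.mul_apply, Pi.smul_apply, smul_eq_mul, gammaPDF, gammaPDF,
    ← ENNReal.ofReal_mul (gammaPDFReal_nonneg (by positivity) hr x),
    ← ENNReal.ofReal_mul (by positivity)]
  congr 1
  have hmul := mul_gammaPDFReal hb hr x
  field_simp
  rw [mul_right_comm, hmul]
  field_simp

lemma withDensity_ofReal_map_div_gammaMeasure_prod {a b r : ℝ} (ha : 0 < a) (hb : 0 < b)
    (hr : 0 < r) :
    (((gammaMeasure a r).prod (gammaMeasure (b + 1) r)).map (fun p ↦ p.1 / p.2)).withDensity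
        ENNReal.ofReal =
      ENNReal.ofReal (a / b) •
        ((gammaMeasure (a + 1) r).prod (gammaMeasure b r)).map (fun p ↦ p.1 / p.2) := by
  -- `ofReal (u / v) = ofReal u * ofReal v⁻¹` once `u ≥ 0`, so the density splits.
  have hdens : ((gammaMeasure a r).prod (gammaMeasure (b + 1) r)).withDensity
      (ENNReal.ofReal ∘ fun p ↦ p.1 / p.2) =
      ((gammaMeasure a r).withDensity ENNReal.ofReal).prod
        ((gammaMeasure (b + 1) r).withDensity fun y ↦ ENNReal.ofReal y⁻¹) := by
    rw [prod_withDensity (by fun_prop) (by fun_prop)]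
    refine withDensity_congr_ae ?_
    filter_upwards [Measure.quasiMeasurePreserving_fst.ae (ae_nonneg_gammaMeasure a r)] with p hp
    simp [div_eq_mul_inv, ENNReal.ofReal_mul hp]
  rw [withDensity_map (by fun_prop) ENNReal.measurable_ofReal, hdens,
    withDensity_ofReal_gammaMeasure ha hr, withDensity_ofReal_inv_gammaMeasure hb hr,
    Measure.prod_smul_left, Measure.prod_smul_right, smul_smul, Measure.map_smul,
    ← ENNReal.ofReal_mul (by positivity)]
  congr 2
  field_simp

lemma IndepFun.map_div_eq {Ω : Type*} [MeasurableSpace Ω] {μ : Measure Ω} [IsFiniteMeasure μ]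
    {X Y : Ω → ℝ} (hXY : IndepFun X Y μ) (hX : Measurable X) (hY : Measurable Y) :
    μ.map (fun ω ↦ X ω / Y ω) = ((μ.map X).prod (μ.map Y)).map (fun p ↦ p.1 / p.2) := by
  rw [← (indepFun_iff_map_prod_eq_prod_map_map hX.aemeasurable hY.aemeasurable).mp hXY,
    Measure.map_map (by fun_prop) (hX.prodMk hY)]
  rfl

section GammaRatio

variable {Ω : Type*} [MeasurableSpace Ω] {μ : Measure Ω} {X Y : Ω → ℝ} {a b r c : ℝ}

lemma withDensity_ofReal_map_const_mul_div [IsFiniteMeasure μ] {A B : Ω → ℝ}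
    (ha : 0 < a) (hb : 0 < b) (hr : 0 < r) (hc : 0 ≤ c)
    (hX : Measurable X) (hY : Measurable Y) (hA : Measurable A) (hB : Measurable B)
    (hXlaw : μ.map X = gammaMeasure a r) (hYlaw : μ.map Y = gammaMeasure (b + 1) r)
    (hAlaw : μ.map A = gammaMeasure (a + 1) r) (hBlaw : μ.map B = gammaMeasure b r)
    (hXY : IndepFun X Y μ) (hAB : IndepFun A B μ) :
    (μ.map fun ω ↦ c * (X ω / Y ω)).withDensity ENNReal.ofReal =
      ENNReal.ofReal (c * (a / b)) • μ.map fun ω ↦ c * (A ω / B ω) := by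
  have hmap {U V : Ω → ℝ} (hU : Measurable U) (hV : Measurable V) (hUV : IndepFun U V μ) :
      μ.map (fun ω ↦ c * (U ω / V ω)) =
        (((μ.map U).prod (μ.map V)).map fun p ↦ p.1 / p.2).map (c * ·) := by
    rw [← hUV.map_div_eq hU hV, Measure.map_map (by fun_prop) (by fun_prop)]
    rfl
  rw [hmap hX hY hXY, hmap hA hB hAB, hXlaw, hYlaw, hAlaw, hBlaw,
    withDensity_ofReal_map_const_mul hc (withDensity_ofReal_map_div_gammaMeasure_prod ha hb hr)]

lemma ae_nonneg_map_const_mul_div {b' r' : ℝ} (hc : 0 ≤ c) (hX : Measurable X)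
    (hY : Measurable Y) (hXlaw : μ.map X = gammaMeasure a r)
    (hYlaw : μ.map Y = gammaMeasure b' r') :
    ∀ᵐ s ∂μ.map fun ω ↦ c * (X ω / Y ω), 0 ≤ s := by
  refine (ae_map_iff (by fun_prop) measurableSet_Ici).2 ?_
  filter_upwards [ae_of_ae_map hX.aemeasurable (hXlaw ▸ ae_nonneg_gammaMeasure _ _),
    ae_of_ae_map hY.aemeasurable (hYlaw ▸ ae_nonneg_gammaMeasure _ _)] with ω hXω hYω
  exact mul_nonneg hc (div_nonneg hXω hYω)

end GammaRatio

end ProbabilityTheory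

lemma mul_mul_div_le_div_div_div_iff {d n p q u v x : ℝ} (hd : 0 < d) (hn : 0 < n)
    (hp : 0 < p) (hq : 0 < q) :
    q * d * x / (p * n) ≤ u / p / (v / q) ↔ x ≤ n / d * (u / v) := by
  have hlhs : u / p / (v / q) = q / p * (u / v) := by
    simp only [div_eq_mul_inv, mul_inv, inv_inv]
    ring
  have hthr : q * d * x / (p * n) = q / p * (d / n * x) := by
    field_simp
  have hx : n / d * (d / n * x) = x := by
    field_simp
  rw [hlhs, hthr, mul_le_mul_iff_right₀ (by positivity),
    ← mul_le_mul_iff_right₀ (a := n / d) (by positivity), hx]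

theorem stmt_7_general
    {Ω : Type*} [MeasureSpace Ω] [IsProbabilityMeasure (ℙ : Measure Ω)]
    (D N : ℕ) (hD : 1 ≤ D) (hN : 3 ≤ N) (x : ℝ)
    (X Y A B : Ω → ℝ)
    (hX : Measurable X) (hY : Measurable Y) (hA : Measurable A) (hB : Measurable B)
    (hXlaw : Measure.map X ℙ = gammaMeasure (D / 2) (1 / 2))
    (hYlaw : Measure.map Y ℙ = gammaMeasure (N / 2) (1 / 2))
    (hAlaw : Measure.map A ℙ = gammaMeasure ((D + 2) / 2) (1 / 2))
    (hBlaw : Measure.map B ℙ = gammaMeasure ((N - 2 : ℕ) / 2) (1 / 2))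
    (hXY : IndepFun X Y ℙ) (hAB : IndepFun A B ℙ)
    (F : Ω → ℝ) (hF : ∀ ω, F ω = (X ω / D) / (Y ω / N)) :
    (∫ ω, max (F ω - x) 0 ∂ℙ) / (∫ ω, F ω ∂ℙ) =
      (ℙ {ω | (A ω / (D + 2)) / (B ω / (N - 2 : ℕ)) ≥
          ((N : ℝ) - 2) * D * x / ((D + 2) * N)}).toReal -
        x * (((N : ℝ) - 2) / N) * (ℙ {ω | F ω ≥ x}).toReal := by
  have hD0 : (0 : ℝ) < D := by exact_mod_cast hD
  have hN2 : (0 : ℝ) < N - 2 := sub_pos.2 (by exact_mod_cast (by omega : 2 < N))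
  rw [show ((N : ℝ) / 2) = (N - 2) / 2 + 1 by ring] at hYlaw
  rw [show ((D : ℝ) + 2) / 2 = D / 2 + 1 by ring] at hAlaw
  rw [Nat.cast_sub (by omega : 2 ≤ N), Nat.cast_ofNat] at hBlaw ⊢
  have hFG : F = fun ω ↦ N / D * (X ω / Y ω) := funext fun ω ↦ by rw [hF]; field_simp
  have hFmeas : Measurable F := hFG ▸ by fun_prop
  set G : Ω → ℝ := fun ω ↦ N / D * (A ω / B ω)
  have hsize := withDensity_ofReal_map_const_mul_div (c := N / D) (by positivity) (by positivity)
    one_half_pos (by positivity) hX hY hA hB hXlaw hYlaw hAlaw hBlaw hXY hAB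
  rw [show (N / D * (D / 2 / ((N - 2) / 2)) : ℝ) = N / (N - 2) by field_simp, ← hFG] at hsize
  have hν : ∀ᵐ s ∂Measure.map F ℙ, 0 ≤ s :=
    hFG ▸ ae_nonneg_map_const_mul_div (by positivity) hX hY hXlaw hYlaw
  have hevent : {ω | A ω / (D + 2) / (B ω / (N - 2)) ≥ (N - 2) * D * x / ((D + 2) * N)} =
      G ⁻¹' Set.Ici x :=
    Set.ext fun ω ↦ mul_mul_div_le_div_div_div_iff hD0 (by positivity) (by positivity) hN2
  have := Measure.isProbabilityMeasure_map (μ := ℙ) (f := G) (by fun_prop)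
  rw [← integral_map (f := fun s ↦ max (s - x) 0) hFmeas.aemeasurable (by fun_prop),
    ← integral_map (f := fun s ↦ s) hFmeas.aemeasurable aestronglyMeasurable_id,
    integral_max_sub_zero_div_integral_of_withDensity_ofReal_eq hν (by positivity) hsize, hevent,
    map_measureReal_apply (by fun_prop) measurableSet_Ici,
    map_measureReal_apply hFmeas measurableSet_Ici, div_div_eq_mul_div, mul_div_assoc]
  rfl

/-- Let `D ≥ 1` and `N ≥ 3` be integers and define
`Fish[D,N,x] = E[(F_{D,N} - x)₊]/E[F_{D,N}]` for `x ≥ 0`, where `F_{D,N} = (X/D)/(Y/N)` is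
a Fisher random variable built from independent chi-squares `X ~ χ²(D)`, `Y ~ χ²(N)`
(a chi-square with `k` degrees of freedom being the Gamma distribution with shape `k/2`
and rate `1/2`).  Then for all `x ≥ 0`,
`Fish(D,N,x) = P(F_{D+2,N-2} ≥ ((N-2)·D·x)/((D+2)·N)) - x·((N-2)/N)·P(F_{D,N} ≥ x)`,
where `F_{D+2,N-2} = (A/(D+2))/(B/(N-2))` for independent chi-squares `A ~ χ²(D+2)`,
`B ~ χ²(N-2)`. -/
theorem stmt_7
    {Ω : Type*} [MeasureSpace Ω] [IsProbabilityMeasure (ℙ : Measure Ω)]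
    (D N : ℕ) (hD : 1 ≤ D) (hN : 3 ≤ N) (x : ℝ) (hx : 0 ≤ x)
    (X Y A B : Ω → ℝ)
    (hX : Measurable X) (hY : Measurable Y) (hA : Measurable A) (hB : Measurable B)
    (hXlaw : Measure.map X ℙ = gammaMeasure (D / 2) (1 / 2))
    (hYlaw : Measure.map Y ℙ = gammaMeasure (N / 2) (1 / 2))
    (hAlaw : Measure.map A ℙ = gammaMeasure ((D + 2) / 2) (1 / 2))
    (hBlaw : Measure.map B ℙ = gammaMeasure ((N - 2 : ℕ) / 2) (1 / 2))
    (hXY : IndepFun X Y ℙ) (hAB : IndepFun A B ℙ)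
    (F : Ω → ℝ) (hF : ∀ ω, F ω = (X ω / D) / (Y ω / N)) :
    (∫ ω, max (F ω - x) 0 ∂ℙ) / (∫ ω, F ω ∂ℙ) =
      (ℙ {ω | (A ω / (D + 2)) / (B ω / (N - 2 : ℕ)) ≥
          ((N : ℝ) - 2) * D * x / ((D + 2) * N)}).toReal -
        x * (((N : ℝ) - 2) / N) * (ℙ {ω | F ω ≥ x}).toReal :=
  stmt_7_general D N hD hN x X Y A B hX hY hA hB hXlaw hYlaw hAlaw hBlaw hXY hAB F hF
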